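/- Let K, L, N, M be positive integers and let A_0, …, A_{2K−1} be complex L×N matrices satisfying Aᴴ_{2k}·A_{2k+1} + Aᴴ_{2k+1}·A_{2k} = 0 for every 0 ≤ k ≤ K−1. For x ∈ ℝ^{2K} set S(x) = Σ_{k=0}^{K−1}(x_{2k}·A_{2k} + x_{2k+1}·A_{2k+1}) and T_k(x) = x_{2k}·A_{2k} + x_{2k+1}·A_{2k+1}. Then the identity ‖V − S(x)·H‖² = Σ_{k=0}^{K−1} ‖V − T_k(x)·H‖² − (K−1)·‖V‖² holds for all V ∈ ℂ^{L×M}, all H ∈ ℂ^{N×M} and all x ∈ ℝ^{2K} if and only if Aᴴ_k·A_l + Aᴴ_l·A_k = 0 for all 0 ≤ k ≠ l ≤ 2K−1. -/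

import Mathlib

/-!
With `⟪X, Y⟫ = Re tr (Xᴴ Y)`, the real inner product whose norm is the Frobenius norm, expanding
both sides shows that the identity amounts to `⟪T_a(x) H, T_b(x) H⟫ = 0` for all blocks `a ≠ b`.
By bilinearity this follows from `⟪A_k H, A_l H⟫ = 0` for `k, l` in different blocks; conversely,
`V = 0` and `x` the indicator of `{k, l}` recover it. Finally `⟪A_k H, A_l H⟫ = 0` for all `H` says
that the Hermitian form of `A_kᴴ A_l + A_lᴴ A_k` vanishes, i.e. that this matrix is zero; pairs
inside one block are the hypothesis on the design.
-/

open Matrix Finset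

/-- Squared Frobenius norm of a complex matrix. -/
noncomputable def frobSq {m n : Type*} [Fintype m] [Fintype n] (M : Matrix m n ℂ) : ℝ :=
  ∑ i, ∑ j, ‖M i j‖ ^ 2

namespace Matrix

variable {n p : Type*} [Fintype n] [Fintype p]

lemma IsHermitian.eq_zero_of_forall_re_dotProduct_mulVec_self {𝕜 : Type*} [RCLike 𝕜]
    {B : Matrix n n 𝕜} (hB : B.IsHermitian)
    (h : ∀ v : n → 𝕜, RCLike.re (star v ⬝ᵥ B *ᵥ v) = 0) : B = 0 := by
  classical
  have hT := isSymmetric_toEuclideanLin_iff.mpr hB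
  refine toEuclideanLin.injective
    ((hT.inner_map_self_eq_zero.mp fun x => ?_).trans (map_zero _).symm)
  rw [hT, ← hT.coe_re_inner_self_apply, EuclideanSpace.inner_eq_star_dotProduct,
    toLpLin_apply, dotProduct_comm, h, RCLike.ofReal_zero]

lemma trace_conjTranspose_replicateCol_mul {α : Type*} [CommSemiring α] [StarRing α]
    (B : Matrix n n α) (v : n → α) :
    trace ((replicateCol p v)ᴴ * B * replicateCol p v) = Fintype.card p * (star v ⬝ᵥ B *ᵥ v) := by
  simp only [trace, diag, mul_apply, dotProduct, mulVec, conjTranspose_apply, replicateCol_apply,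
    Finset.mul_sum, Finset.sum_mul, sum_const, card_univ, nsmul_eq_mul]
  rw [Finset.sum_comm]
  simp [mul_assoc]

end Matrix

section FrobeniusInner

variable {l m n p : Type*} [Fintype l] [Fintype m] [Fintype n] [Fintype p]

noncomputable def frobInner : Matrix m n ℂ →ₗ[ℝ] Matrix m n ℂ →ₗ[ℝ] ℝ :=
  LinearMap.mk₂ ℝ (fun X Y => (trace (Xᴴ * Y)).re)
    (fun X X' Y => by simp [Matrix.add_mul])
    (fun r X Y => by simp [Matrix.smul_mul])
    (fun X Y Y' => by simp [Matrix.mul_add])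
    (fun r X Y => by simp [Matrix.mul_smul])

lemma frobInner_apply (X Y : Matrix m n ℂ) : frobInner X Y = (trace (Xᴴ * Y)).re := rfl

lemma frobInner_comm (X Y : Matrix m n ℂ) : frobInner X Y = frobInner Y X := by
  rw [frobInner_apply, frobInner_apply, ← conjTranspose_conjTranspose (Xᴴ * Y),
    trace_conjTranspose, conjTranspose_mul, conjTranspose_conjTranspose, Complex.star_def,
    Complex.conj_re]

lemma frobSq_eq_frobInner (X : Matrix m n ℂ) : frobSq X = frobInner X X := by
  simp only [frobSq, frobInner_apply, trace, Matrix.diag, mul_apply, conjTranspose_apply,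
    Complex.re_sum, Complex.star_def, Complex.sq_norm, Complex.normSq_apply, Complex.mul_re,
    Complex.conj_re, Complex.conj_im]
  rw [Finset.sum_comm]
  simp only [neg_mul, sub_neg_eq_add]

lemma frobSq_add (X Y : Matrix m n ℂ) :
    frobSq (X + Y) = frobSq X + 2 * frobInner X Y + frobSq Y := by
  simp only [frobSq_eq_frobInner, map_add, LinearMap.add_apply, frobInner_comm Y X]
  ring

lemma frobSq_sub (X Y : Matrix m n ℂ) :
    frobSq (X - Y) = frobSq X - 2 * frobInner X Y + frobSq Y := by
  simp only [frobSq_eq_frobInner, map_sub, LinearMap.sub_apply, frobInner_comm Y X]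
  ring

lemma frobSq_neg (X : Matrix m n ℂ) : frobSq (-X) = frobSq X := by
  simp only [frobSq_eq_frobInner, map_neg, LinearMap.neg_apply, neg_neg]

lemma frobSq_zero : frobSq (0 : Matrix m n ℂ) = 0 := by
  simp only [frobSq_eq_frobInner, map_zero]

lemma frobSq_sum_of_pairwise {ι : Type*} {s : Finset ι} {f : ι → Matrix m n ℂ}
    (h : (s : Set ι).Pairwise fun a b => frobInner (f a) (f b) = 0) :
    frobSq (∑ a ∈ s, f a) = ∑ a ∈ s, frobSq (f a) := by
  simp only [frobSq_eq_frobInner, map_sum, LinearMap.sum_apply]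
  refine Finset.sum_congr rfl fun a ha => ?_
  rw [Finset.sum_eq_single_of_mem a ha fun b hb hba => h hb ha hba]

theorem frobSq_sub_sum_of_pairwise {ι : Type*} {s : Finset ι} (V : Matrix m n ℂ)
    {f : ι → Matrix m n ℂ} (h : (s : Set ι).Pairwise fun a b => frobInner (f a) (f b) = 0) :
    frobSq (V - ∑ a ∈ s, f a) = ∑ a ∈ s, frobSq (V - f a) - (#s - 1) * frobSq V := by
  simp only [frobSq_sub, frobSq_sum_of_pairwise h, map_sum, Finset.sum_add_distrib,
    Finset.sum_sub_distrib, Finset.sum_const, nsmul_eq_mul, Finset.mul_sum]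
  ring

lemma two_mul_frobInner_mul_mul (P Q : Matrix l n ℂ) (H : Matrix n p ℂ) :
    2 * frobInner (P * H) (Q * H) = (trace (Hᴴ * (Pᴴ * Q + Qᴴ * P) * H)).re := by
  rw [two_mul]
  nth_rewrite 2 [frobInner_comm]
  rw [frobInner_apply, frobInner_apply, ← Complex.add_re, ← trace_add]
  simp only [conjTranspose_mul, Matrix.mul_add, Matrix.add_mul, Matrix.mul_assoc]

theorem frobInner_mul_mul_eq_zero_iff [Nonempty p] (P Q : Matrix l n ℂ) :
    (∀ H : Matrix n p ℂ, frobInner (P * H) (Q * H) = 0) ↔ Pᴴ * Q + Qᴴ * P = 0 := by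
  constructor
  · intro h
    have hB : (Pᴴ * Q + Qᴴ * P).IsHermitian := by
      simp [IsHermitian, conjTranspose_mul, add_comm]
    refine hB.eq_zero_of_forall_re_dotProduct_mulVec_self fun v => ?_
    have hv := two_mul_frobInner_mul_mul P Q (replicateCol p v)
    rw [h, mul_zero, trace_conjTranspose_replicateCol_mul, ← Complex.ofReal_natCast,
      Complex.re_ofReal_mul] at hv
    rw [RCLike.re_to_complex]
    exact (mul_eq_zero.mp hv.symm).resolve_left (Nat.cast_ne_zero.mpr Fintype.card_ne_zero)
  · intro h H
    have hH := two_mul_frobInner_mul_mul P Q H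
    rw [h, Matrix.mul_zero, Matrix.zero_mul, trace_zero, Complex.zero_re] at hH
    linarith

end FrobeniusInner

section Design

variable {l n : Type*}

noncomputable def designTerm (A : ℕ → Matrix l n ℂ) (x : ℕ → ℝ) (k : ℕ) : Matrix l n ℂ :=
  (x (2*k) : ℂ) • A (2*k) + (x (2*k+1) : ℂ) • A (2*k+1)

lemma frobInner_designTerm_mul_eq_zero [Fintype l] [Fintype n] {p : Type*} [Fintype p]
    {A : ℕ → Matrix l n ℂ} {H : Matrix n p ℂ} {a b : ℕ}
    (hA : ∀ i j, i / 2 = a → j / 2 = b → frobInner (A i * H) (A j * H) = 0) (x : ℕ → ℝ) :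
    frobInner (designTerm A x a * H) (designTerm A x b * H) = 0 := by
  simp only [designTerm, Matrix.add_mul, Complex.coe_smul, Matrix.smul_mul, map_add, map_smul,
    LinearMap.add_apply, LinearMap.smul_apply, smul_eq_mul]
  rw [hA (2*a) (2*b) (by omega) (by omega), hA (2*a) (2*b+1) (by omega) (by omega),
    hA (2*a+1) (2*b) (by omega) (by omega), hA (2*a+1) (2*b+1) (by omega) (by omega)]
  ring

lemma designTerm_indicator (A : ℕ → Matrix l n ℂ) {k k' : ℕ} (hkk' : k / 2 ≠ k' / 2) (m : ℕ) :
    designTerm A (fun i => if i = k ∨ i = k' then 1 else 0) m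
      = if m = k / 2 then A k else if m = k' / 2 then A k' else 0 := by
  unfold designTerm
  split_ifs <;> simp <;> split_ifs <;> (try simp) <;> first | omega | (congr 1; omega)

lemma sum_designTerm_indicator {β : Type*} [AddCommMonoid β] (A : ℕ → Matrix l n ℂ)
    (F : Matrix l n ℂ → β) (hF : F 0 = 0) {K k k' : ℕ} (hk : k < 2 * K) (hk' : k' < 2 * K)
    (hkk' : k / 2 ≠ k' / 2) :
    ∑ m ∈ range K, F (designTerm A (fun i => if i = k ∨ i = k' then 1 else 0) m)
      = F (A k) + F (A k') := by
  rw [Finset.sum_eq_add_of_mem (k / 2) (k' / 2) (by simp; omega) (by simp; omega) hkk'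
    fun m _ hm => by rw [designTerm_indicator A hkk', if_neg hm.1, if_neg hm.2, hF],
    designTerm_indicator A hkk', designTerm_indicator A hkk', if_pos rfl, if_neg hkk'.symm,
    if_pos rfl]

theorem frobInner_mul_eq_zero_of_decouples [Fintype l] [Fintype n] {p : Type*} [Fintype p]
    {K : ℕ} {A : ℕ → Matrix l n ℂ}
    (hdec : ∀ (V : Matrix l p ℂ) (H : Matrix n p ℂ) (x : ℕ → ℝ),
      frobSq (V - (∑ m ∈ range K, designTerm A x m) * H)
        = ∑ m ∈ range K, frobSq (V - designTerm A x m * H) - ((K : ℝ) - 1) * frobSq V)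
    {k k' : ℕ} (hk : k < 2 * K) (hk' : k' < 2 * K) (hkk' : k / 2 ≠ k' / 2) (H : Matrix n p ℂ) :
    frobInner (A k * H) (A k' * H) = 0 := by
  have h := hdec 0 H fun i => if i = k ∨ i = k' then 1 else 0
  have hsum := sum_designTerm_indicator A (fun T => T) rfl hk hk' hkk'
  have hsumSq := sum_designTerm_indicator A (fun T => frobSq (0 - T * H))
    (by rw [Matrix.zero_mul, sub_zero, frobSq_zero]) hk hk' hkk'
  beta_reduce at hsum hsumSq
  rw [hsum, hsumSq] at h
  simp only [zero_sub, frobSq_neg, frobSq_zero, mul_zero, sub_zero, Matrix.add_mul,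
    frobSq_add] at h
  linarith

end Design

theorem single_symbol_decodable_characterization'_general
    (K L N M : ℕ) (hM : 0 < M)
    (A : ℕ → Matrix (Fin L) (Fin N) ℂ)
    (hpair : ∀ k < K, (A (2*k))ᴴ * A (2*k+1) + (A (2*k+1))ᴴ * A (2*k) = 0) :
    (∀ (V : Matrix (Fin L) (Fin M) ℂ) (H : Matrix (Fin N) (Fin M) ℂ) (x : ℕ → ℝ),
      frobSq (V - (∑ k ∈ Finset.range K,
          ((x (2*k) : ℂ) • A (2*k) + (x (2*k+1) : ℂ) • A (2*k+1))) * H)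
        = (∑ k ∈ Finset.range K,
            frobSq (V - ((x (2*k) : ℂ) • A (2*k) + (x (2*k+1) : ℂ) • A (2*k+1)) * H))
          - ((K : ℝ) - 1) * frobSq V)
    ↔ (∀ k l, k < 2*K → l < 2*K → k ≠ l →
        (A k)ᴴ * A l + (A l)ᴴ * A k = 0) := by
  have : Nonempty (Fin M) := ⟨⟨0, hM⟩⟩
  constructor
  · intro hdec k l hk hl hkl
    by_cases hblk : k / 2 = l / 2
    · obtain ⟨m, hm, ⟨rfl, rfl⟩ | ⟨rfl, rfl⟩⟩ :
          ∃ m < K, (k = 2*m ∧ l = 2*m+1) ∨ (k = 2*m+1 ∧ l = 2*m) :=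
        ⟨k / 2, by omega, by omega⟩
      · exact hpair m hm
      · rw [add_comm]; exact hpair m hm
    · exact (frobInner_mul_mul_eq_zero_iff _ _).mp
        (frobInner_mul_eq_zero_of_decouples hdec hk hl hblk)
  · intro hA V H x
    rw [Matrix.sum_mul, frobSq_sub_sum_of_pairwise V, card_range]
    intro a ha b hb hab
    simp only [coe_range, Set.mem_Iio] at ha hb
    refine frobInner_designTerm_mul_eq_zero (fun i j hi hj => ?_) x
    exact (frobInner_mul_mul_eq_zero_iff _ _).mpr (hA i j (by omega) (by omega) (by omega)) H

/-- For a linear design whose in-phase and quadrature weight matrices of each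
variable satisfy `Aᴴ₂ₖ A₂ₖ₊₁ + Aᴴ₂ₖ₊₁ A₂ₖ = 0`, the ML metric decomposes into
single-variable terms iff `Aᴴₖ Aₗ + Aᴴₗ Aₖ = 0` for all `k ≠ l`. -/
theorem single_symbol_decodable_characterization'
    (K L N M : ℕ) (hK : 0 < K) (hL : 0 < L) (hN : 0 < N) (hM : 0 < M)
    (A : ℕ → Matrix (Fin L) (Fin N) ℂ)
    (hpair : ∀ k < K, (A (2*k))ᴴ * A (2*k+1) + (A (2*k+1))ᴴ * A (2*k) = 0) :
    (∀ (V : Matrix (Fin L) (Fin M) ℂ) (H : Matrix (Fin N) (Fin M) ℂ) (x : ℕ → ℝ),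
      frobSq (V - (∑ k ∈ Finset.range K,
          ((x (2*k) : ℂ) • A (2*k) + (x (2*k+1) : ℂ) • A (2*k+1))) * H)
        = (∑ k ∈ Finset.range K,
            frobSq (V - ((x (2*k) : ℂ) • A (2*k) + (x (2*k+1) : ℂ) • A (2*k+1)) * H))
          - ((K : ℝ) - 1) * frobSq V)
    ↔ (∀ k l, k < 2*K → l < 2*K → k ≠ l →
        (A k)ᴴ * A l + (A l)ᴴ * A k = 0) :=
  single_symbol_decodable_characterization'_general K L N M hM A hpair
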